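/- arXiv:2402.07015 — 3 statements merged into one kernel-verified Lean document; each statement's English description precedes it below -/
import Mathlib

section
/- The Thue–Morse sequence is cube-free: there do not exist natural numbers i and n with n ≥ 1 such that t (i + j) = t (i + n + j) and t (i + n + j) = t (i + 2*n + j) for all j < n. -/
/-- The Thue–Morse sequence: `t n = true` iff the number of 1s in the
binary expansion of `n` is odd. -/
def thueMorse (n : ℕ) : Bool := (Nat.digits 2 n).count 1 % 2 == 1

lemma tm_two_mul (k : ℕ) : thueMorse (2 * k) = thueMorse k := by
  rcases Nat.eq_zero_or_pos k with rfl | hk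
  · rfl
  · unfold thueMorse
    rw [Nat.digits_def' (by norm_num : 1 < 2) (by omega)]
    have h1 : (2*k) % 2 = 0 := by omega
    have h2 : (2*k) / 2 = k := by omega
    rw [h1, h2, List.count_cons]
    simp

lemma tm_two_mul_add_one (k : ℕ) : thueMorse (2 * k + 1) = !thueMorse k := by
  unfold thueMorse
  rw [Nat.digits_def' (by norm_num : 1 < 2) (by omega)]
  have h1 : (2*k+1) % 2 = 1 := by omega
  have h2 : (2*k+1) / 2 = k := by omega
  rw [h1, h2, List.count_cons]
  rcases Nat.mod_two_eq_zero_or_one ((Nat.digits 2 k).count 1) with h|h <;>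
    simp [Nat.add_mod, h]

/-- Thue–Morse is overlap-free. -/
lemma tm_no_overlap : ∀ n, 1 ≤ n → ∀ i, ¬ (∀ j ≤ n, thueMorse (i+j) = thueMorse (i+n+j)) := by
  intro n
  induction n using Nat.strong_induction_on with
  | _ n IH =>
    intro hn i h
    rcases Nat.even_or_odd n with ⟨m, hm⟩ | ⟨m, hm⟩
    · -- n = 2m : reduce to smaller overlap
      have hm1 : 1 ≤ m := by omega
      rcases Nat.even_or_odd i with ⟨a, ha⟩ | ⟨a, ha⟩
      · apply IH m (by omega) hm1 a
        intro j hj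
        have := h (2*j) (by omega)
        have e1 : i + 2*j = 2*(a+j) := by omega
        have e2 : i + n + 2*j = 2*(a+m+j) := by omega
        rw [e1, e2, tm_two_mul, tm_two_mul] at this
        exact this
      · apply IH m (by omega) hm1 a
        intro j hj
        have := h (2*j) (by omega)
        have e1 : i + 2*j = 2*(a+j) + 1 := by omega
        have e2 : i + n + 2*j = 2*(a+m+j) + 1 := by omega
        rw [e1, e2, tm_two_mul_add_one, tm_two_mul_add_one] at this
        exact Bool.not_inj this
    · -- n = 2m+1 : derive alternation, contradiction
      have alt : ∀ k, k < n → thueMorse (i+k+1) = !thueMorse (i+k) := by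
        intro k hk
        rcases Nat.even_or_odd (i+k) with ⟨c, hc⟩ | ⟨c, hc⟩
        · have e1 : i + k = 2*c := by omega
          have e2 : i + k + 1 = 2*c + 1 := by omega
          rw [e2, e1, tm_two_mul_add_one, tm_two_mul]
        · have h1 := h k (by omega)
          have h2 := h (k+1) (by omega)
          have e1 : i + n + k = 2*(c+m+1) := by omega
          have e2 : i + n + (k+1) = 2*(c+m+1) + 1 := by omega
          rw [e1] at h1
          rw [e2] at h2
          rw [show i + (k+1) = i + k + 1 from by omega] at h2
          rw [h2, h1, tm_two_mul_add_one, tm_two_mul]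
      have main : ∀ k, 2*k+1 ≤ n →
          thueMorse (i+2*k) = thueMorse i ∧ thueMorse (i+2*k+1) = !thueMorse i := by
        intro k
        induction k with
        | zero => intro hk; exact ⟨by norm_num, by simpa using alt 0 (by omega)⟩
        | succ k ih =>
          intro hk
          obtain ⟨ih1, ih2⟩ := ih (by omega)
          have a1 : thueMorse (i+2*(k+1)) = thueMorse i := by
            have := alt (2*k+1) (by omega)
            rw [show i + 2*(k+1) = i + (2*k+1) + 1 from by omega, this,
              show i + (2*k+1) = i + 2*k + 1 from by omega, ih2, Bool.not_not]
          refine ⟨a1, ?_⟩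
          have := alt (2*(k+1)) (by omega)
          rw [this, a1]
      have h0 := h 0 (by omega)
      have hm' := (main m (by omega)).2
      rw [show i + 2*m + 1 = i + n from by omega] at hm'
      simp only [Nat.add_zero] at h0
      rw [h0] at hm'
      exact absurd hm' (by cases thueMorse (i+n) <;> simp)

/-- The Thue–Morse sequence is cube-free. -/
theorem thueMorse_cubeFree :
    ¬ ∃ (i n : ℕ), 1 ≤ n ∧ ∀ j < n,
      thueMorse (i + j) = thueMorse (i + n + j) ∧
      thueMorse (i + n + j) = thueMorse (i + 2 * n + j) := by
  rintro ⟨i, n, hn, h⟩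
  apply tm_no_overlap n hn i
  intro j hj
  rcases Nat.lt_or_ge j n with hjn | hjn
  · exact (h j hjn).1
  · have hj' : j = n := by omega
    subst hj'
    have := (h 0 (by omega)).2
    simpa [two_mul, Nat.add_assoc] using this
end

section
/- The Thue–Morse sequence is uniformly recurrent: for all i, n : ℕ there exists N : ℕ such that for every m : ℕ there exists p with m ≤ p ≤ m + N and t (p + j) = t (i + j) for all j < n (every block of t recurs in t with bounded gaps). -/
/-!
Writing `a * 2 ^ k + b` with `b < 2 ^ k` concatenates the binary digits of `b` and `a`, so
`t (a * 2 ^ k + b) = t a xor t b`. Hence every block of `t` inside `[0, 2 ^ k)` reappears shifted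
by `a * 2 ^ k` whenever `t a = false`, and since `t (2c + 1) = !t (2c)` such `a` occur in every
three consecutive integers.
-/

theorem thueMorse_two_mul (n : ℕ) : thueMorse (2 * n) = thueMorse n := by
  rcases Nat.eq_zero_or_pos n with rfl | hn
  · rfl
  · rw [thueMorse, Nat.digits_def' (by norm_num) (by omega)]
    simp [thueMorse]

theorem thueMorse_two_mul_add_one (n : ℕ) : thueMorse (2 * n + 1) = !thueMorse n := by
  rw [thueMorse, Nat.digits_def' (by norm_num) (by omega)]
  have hmod : (2 * n + 1) % 2 = 1 := by omega
  have hdiv : (2 * n + 1) / 2 = n := by omega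
  rw [hmod, hdiv, thueMorse]
  rcases Nat.mod_two_eq_zero_or_one ((Nat.digits 2 n).count 1) with h | h <;>
    simp [h, Nat.add_mod]

theorem thueMorse_mul_two_pow_add (a : ℕ) {k b : ℕ} (hb : b < 2 ^ k) :
    thueMorse (a * 2 ^ k + b) = xor (thueMorse a) (thueMorse b) := by
  induction k generalizing b with
  | zero =>
    obtain rfl : b = 0 := by omega
    simp [thueMorse]
  | succ k ih =>
    rw [pow_succ] at hb
    obtain ⟨d, rfl | rfl⟩ := Nat.even_or_odd' b
    · have hsplit : a * 2 ^ (k + 1) + 2 * d = 2 * (a * 2 ^ k + d) := by ring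
      rw [hsplit, thueMorse_two_mul, thueMorse_two_mul, ih (by omega)]
    · have hsplit : a * 2 ^ (k + 1) + (2 * d + 1) = 2 * (a * 2 ^ k + d) + 1 := by ring
      rw [hsplit, thueMorse_two_mul_add_one, thueMorse_two_mul_add_one, ih (by omega),
        Bool.xor_not]

theorem exists_mem_Icc_thueMorse_eq (m : ℕ) (v : Bool) :
    ∃ a ∈ Set.Icc m (m + 2), thueMorse a = v := by
  set c := (m + 1) / 2
  by_cases h : thueMorse (2 * c) = v
  · exact ⟨2 * c, ⟨by omega, by omega⟩, h⟩
  · refine ⟨2 * c + 1, ⟨by omega, by omega⟩, ?_⟩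
    rw [thueMorse_two_mul_add_one, ← thueMorse_two_mul, Bool.not_eq_eq_eq_not]
    exact Bool.eq_not.mpr h

/-- The Thue–Morse sequence is uniformly recurrent: every block of `t`
recurs with bounded gaps. -/
theorem thueMorse_uniformly_recurrent (i n : ℕ) :
    ∃ N : ℕ, ∀ m : ℕ, ∃ p : ℕ, m ≤ p ∧ p ≤ m + N ∧
      ∀ j < n, thueMorse (p + j) = thueMorse (i + j) := by
  set K := 2 ^ (i + n)
  have hblock : i + n < K := Nat.lt_two_pow_self
  have hK : 0 < K := by positivity
  refine ⟨3 * K + i, fun m => ?_⟩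
  obtain ⟨a, ⟨ha_ge, ha_le⟩, ha⟩ := exists_mem_Icc_thueMorse_eq (m / K + 1) false
  have hm_lt : m < (m / K + 1) * K := by rw [add_mul, one_mul]; exact Nat.lt_div_mul_add hK
  have hm_ge : m / K * K ≤ m := Nat.div_mul_le_self m K
  refine ⟨a * K + i, ?_, ?_, fun j hj => ?_⟩
  · nlinarith
  · nlinarith
  · rw [add_assoc, thueMorse_mul_two_pow_add a (by omega), ha, Bool.false_xor]
end

section
/- Gottschalk's theorem for the one-sided binary shift: for x : ℕ → Bool, the orbit closure O := closure {σ^[k] x | k : ℕ} is minimal (every nonempty closed K ⊆ O with σ '' K ⊆ K equals O) if and only if x is almost periodic, i.e., for every n : ℕ the set {k : ℕ | ∀ j < n, x (k + j) = x j} is relatively dense in ℕ (there exists N such that every interval [m, m + N] meets it). -/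
def shift (x : ℕ → Bool) : ℕ → Bool := fun n => x (n + 1)

lemma shift_iter (x : ℕ → Bool) (k n : ℕ) : shift^[k] x n = x (n + k) := by
  induction k generalizing x n with
  | zero => simp
  | succ k ih =>
    rw [Function.iterate_succ_apply, ih]
    show x (n + k + 1) = x (n + (k + 1))
    congr 1

lemma continuous_shift : Continuous shift :=
  continuous_pi fun n => continuous_apply (n + 1)

lemma isOpen_cyl (f : ℕ → ℕ) (g : ℕ → Bool) (n : ℕ) :
    IsOpen {y : ℕ → Bool | ∀ j < n, y (f j) = g j} := by
  have : {y : ℕ → Bool | ∀ j < n, y (f j) = g j}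
      = ⋂ j ∈ Finset.range n, ((· (f j)) ⁻¹' {g j}) := by
    ext y; simp
  rw [this]
  exact isOpen_biInter_finset fun j _ =>
    (isOpen_discrete {g j}).preimage (continuous_apply (f j))

lemma closure_agree {S : Set (ℕ → Bool)} {y : ℕ → Bool} (hy : y ∈ closure S) (n : ℕ) :
    ∃ w ∈ S, ∀ j < n, w j = y j := by
  obtain ⟨w, hw1, hw2⟩ := mem_closure_iff.mp hy _ (isOpen_cyl id y n) (fun j _ => rfl)
  exact ⟨w, hw2, hw1⟩

lemma mem_closure_of_agree {K : Set (ℕ → Bool)} {x : ℕ → Bool}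
    (h : ∀ n, ∃ z ∈ K, ∀ j < n, z j = x j) : x ∈ closure K := by
  rw [mem_closure_iff_nhds]
  intro U hU
  rw [nhds_pi] at hU
  obtain ⟨I, hIfin, t, ht, hsub⟩ := Filter.mem_pi.mp hU
  obtain ⟨n, hn⟩ := hIfin.bddAbove
  obtain ⟨z, hzK, hz⟩ := h (n + 1)
  refine ⟨z, hsub ?_, hzK⟩
  intro i hi
  rw [hz i (by have := hn hi; omega)]
  exact mem_of_mem_nhds (ht i)

/-- Gottschalk's theorem for the one-sided binary shift: the orbit closure of
`x` is minimal if and only if `x` is almost periodic (every initial block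
of `x` recurs in `x` along a relatively dense set of positions). -/
theorem gottschalk_minimal_iff_almostPeriodic (x : ℕ → Bool) :
    (∀ K : Set (ℕ → Bool),
        K ⊆ closure {y : ℕ → Bool | ∃ k : ℕ, shift^[k] x = y} →
        K.Nonempty → IsClosed K → shift '' K ⊆ K →
        K = closure {y : ℕ → Bool | ∃ k : ℕ, shift^[k] x = y}) ↔
    (∀ n : ℕ, ∃ N : ℕ, ∀ m : ℕ, ∃ k : ℕ, m ≤ k ∧ k ≤ m + N ∧
        ∀ j < n, x (k + j) = x j) := by
  set Orb : Set (ℕ → Bool) := {y : ℕ → Bool | ∃ k : ℕ, shift^[k] x = y} with hOrbdef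
  set O : Set (ℕ → Bool) := closure Orb with hOdef
  have hOc : IsClosed O := isClosed_closure
  have hOinv : ∀ w ∈ O, shift w ∈ O := by
    intro w hw
    have h1 : shift '' O ⊆ closure (shift '' Orb) :=
      image_closure_subset_closure_image continuous_shift
    have h2 : shift '' Orb ⊆ Orb := by
      rintro _ ⟨_, ⟨k, rfl⟩, rfl⟩
      exact ⟨k + 1, Function.iterate_succ_apply' shift k x⟩
    exact closure_mono h2 (h1 ⟨w, hw, rfl⟩)
  constructor
  · -- minimal → almost periodic
    intro hmin n
    by_contra hap
    push_neg at hap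
    -- hap : ∀ N, ∃ m, ∀ k, m ≤ k → k ≤ m + N → ∃ j < n, x (k + j) ≠ x j
    set B : Set (ℕ → Bool) := {y : ℕ → Bool | ∀ p : ℕ, ∃ j < n, y (p + j) ≠ x j} with hBdef
    have hBclosed : IsClosed B := by
      have h : B = ⋂ p : ℕ, {y : ℕ → Bool | ∀ j < n, y (p + j) = x j}ᶜ := by
        ext y
        simp only [hBdef, Set.mem_setOf_eq, Set.mem_iInter, Set.mem_compl_iff, not_forall]
        push_neg
        simp only [exists_prop]
      rw [h]
      exact isClosed_iInter fun p => (isOpen_cyl (p + ·) x n).isClosed_compl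
    set Z : ℕ → Set (ℕ → Bool) :=
      fun P => O ∩ {y : ℕ → Bool | ∀ p ≤ P, ∃ j < n, y (p + j) ≠ x j} with hZdef
    have hZclosed : ∀ P, IsClosed (Z P) := by
      intro P
      refine hOc.inter ?_
      have h : {y : ℕ → Bool | ∀ p ≤ P, ∃ j < n, y (p + j) ≠ x j}
          = ⋂ p ∈ Finset.range (P + 1), {y : ℕ → Bool | ∀ j < n, y (p + j) = x j}ᶜ := by
        ext y
        simp only [Set.mem_setOf_eq, Set.mem_iInter, Set.mem_compl_iff, not_forall,
          Finset.mem_range, Nat.lt_succ_iff]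
        push_neg
        simp only [exists_prop]
      rw [h]
      exact isClosed_biInter fun p _ => (isOpen_cyl (p + ·) x n).isClosed_compl
    have hZne : ∀ P, (Z P).Nonempty := by
      intro P
      obtain ⟨m, hm⟩ := hap (P + n)
      refine ⟨shift^[m] x, subset_closure ⟨m, rfl⟩, ?_⟩
      intro p hp
      obtain ⟨j, hj, hne⟩ := hm (m + p) (by omega) (by omega)
      refine ⟨j, hj, ?_⟩
      rw [shift_iter]
      have h : p + j + m = m + p + j := by omega
      rw [h]
      exact hne
    have hmono : ∀ P, Z (P + 1) ⊆ Z P := by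
      rintro P y ⟨h1, h2⟩
      exact ⟨h1, fun p hp => h2 p (by omega)⟩
    obtain ⟨y, hy⟩ := IsCompact.nonempty_iInter_of_sequence_nonempty_isCompact_isClosed Z
      hmono hZne (hZclosed 0).isCompact hZclosed
    rw [Set.mem_iInter] at hy
    have hyO : y ∈ O := (hy 0).1
    have hyB : y ∈ B := fun p => (hy p).2 p le_rfl
    have hKinv : shift '' (O ∩ B) ⊆ O ∩ B := by
      rintro _ ⟨w, ⟨hwO, hwB⟩, rfl⟩
      refine ⟨hOinv w hwO, ?_⟩
      intro p
      obtain ⟨j, hj, hne⟩ := hwB (p + 1)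
      refine ⟨j, hj, ?_⟩
      show w (p + j + 1) ≠ x j
      have h : p + j + 1 = p + 1 + j := by omega
      rw [h]
      exact hne
    have hKeq := hmin (O ∩ B) Set.inter_subset_left ⟨y, hyO, hyB⟩
      (hOc.inter hBclosed) hKinv
    have hxO : x ∈ O := subset_closure ⟨0, rfl⟩
    rw [← hKeq] at hxO
    obtain ⟨j, hj, hne⟩ := hxO.2 0
    exact hne (by rw [Nat.zero_add])
  · -- almost periodic → minimal
    intro hap K hKO hKne hKcl hKinv
    have hinv : ∀ d, ∀ z ∈ K, shift^[d] z ∈ K := by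
      intro d
      induction d with
      | zero => intro z hz; exact hz
      | succ d ih =>
        intro z hz
        rw [Function.iterate_succ_apply']
        exact hKinv ⟨_, ih z hz, rfl⟩
    obtain ⟨y, hyK⟩ := hKne
    have hxK : x ∈ K := by
      rw [← hKcl.closure_eq]
      apply mem_closure_of_agree
      intro n
      obtain ⟨N, hN⟩ := hap n
      obtain ⟨w, ⟨k, hk⟩, hw⟩ := closure_agree (hKO hyK) (N + n)
      obtain ⟨p, hp1, hp2, hp3⟩ := hN k
      refine ⟨shift^[p - k] y, hinv _ y hyK, ?_⟩
      intro j hj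
      rw [shift_iter]
      have h1 : y (j + (p - k)) = w (j + (p - k)) := (hw _ (by omega)).symm
      rw [h1, ← hk, shift_iter]
      have h2 : j + (p - k) + k = p + j := by omega
      rw [h2]
      exact hp3 j hj
    refine Set.Subset.antisymm hKO (closure_minimal ?_ hKcl)
    rintro _ ⟨k, rfl⟩
    exact hinv k x hxK
end
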